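/- arXiv:1710.05131 — 2 statements merged into one kernel-verified Lean document; each statement's English description precedes it below -/
import Mathlib

section
/- Fix t and suppose p(t) > κ₁ and that x ↦ v(t,x) is concave, non-decreasing and bounded on [0,∞), with β₁, β₂ > 0, κ₂ > 0, λ(t) > 0. Define q(x) = (1/β₁)(p(t) - κ₁ - ∂ₓv(t,x))⁺ and a(x) = (1/β₂)(λ(t)(v(t,x+δ) - v(t,x)) - κ₂)⁺ (with ∂ₓv a subderivative selection, non-increasing in x). Then: (i) q is non-decreasing in x; (ii) a is non-increasing in x; (iii) there exists x_sat < ∞ such that a(x) = 0 for all x ≥ x_sat. -/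
/-- Monotonicity and saturation of the equilibrium controls: for a concave,
non-decreasing, bounded value function `v`, production is non-decreasing in
reserves, exploration is non-increasing, and vanishes beyond a finite
saturation level. -/
theorem stmt12 (p κ₁ κ₂ β₁ β₂ lam δ : ℝ)
    (hp : κ₁ < p) (hβ₁ : 0 < β₁) (hβ₂ : 0 < β₂) (hκ₂ : 0 < κ₂)
    (hlam : 0 < lam) (hδ : 0 < δ)
    (v vx : ℝ → ℝ)
    (hconc : ConcaveOn ℝ (Set.Ici 0) v)
    (hmono : MonotoneOn v (Set.Ici 0))
    (hbdd : BddAbove (v '' Set.Ici 0))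
    (hvx : AntitoneOn vx (Set.Ici 0))
    (hsupergrad : ∀ x ∈ Set.Ici (0:ℝ), ∀ y ∈ Set.Ici (0:ℝ),
      v y ≤ v x + vx x * (y - x)) :
    MonotoneOn (fun x => 1 / β₁ * max (p - κ₁ - vx x) 0) (Set.Ici 0) ∧
    AntitoneOn (fun x => 1 / β₂ * max (lam * (v (x + δ) - v x) - κ₂) 0) (Set.Ici 0) ∧
    ∃ xsat : ℝ, ∀ x ≥ xsat, 1 / β₂ * max (lam * (v (x + δ) - v x) - κ₂) 0 = 0 := by
  -- increments are antitone
  have hΔ : ∀ x ∈ Set.Ici (0:ℝ), ∀ y ∈ Set.Ici (0:ℝ), x ≤ y →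
      v (y + δ) - v y ≤ v (x + δ) - v x := by
    intro x hx y hy hxy
    have hx' : (0:ℝ) ≤ x := hx
    have hy' : (0:ℝ) ≤ y := hy
    have hxδ : x + δ ∈ Set.Ici (0:ℝ) := by simp [Set.mem_Ici]; linarith
    have hyδ : y + δ ∈ Set.Ici (0:ℝ) := by simp [Set.mem_Ici]; linarith
    rcases le_total (x + δ) y with h | h
    · have h1 := hsupergrad y hy (y + δ) hyδ
      have h2 := hsupergrad (x + δ) hxδ x hx
      have h3 : vx y ≤ vx (x + δ) := hvx hxδ hy h
      nlinarith [hδ.le]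
    · have h1 := hsupergrad (x + δ) hxδ (y + δ) hyδ
      have h2 := hsupergrad y hy x hx
      have h3 : vx (x + δ) ≤ vx y := hvx hy hxδ h
      nlinarith [sub_nonneg.mpr hxy]
  refine ⟨?_, ?_, ?_⟩
  · intro x hx y hy hxy
    have : vx y ≤ vx x := hvx hx hy hxy
    have : max (p - κ₁ - vx x) 0 ≤ max (p - κ₁ - vx y) 0 :=
      max_le_max (by linarith) le_rfl
    have hβ : 0 ≤ 1 / β₁ := by positivity
    exact mul_le_mul_of_nonneg_left this hβ
  · intro x hx y hy hxy
    have h := hΔ x hx y hy hxy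
    have : max (lam * (v (y + δ) - v y) - κ₂) 0 ≤
        max (lam * (v (x + δ) - v x) - κ₂) 0 := by
      apply max_le_max _ le_rfl
      have := mul_le_mul_of_nonneg_left h hlam.le
      linarith
    have hβ : 0 ≤ 1 / β₂ := by positivity
    exact mul_le_mul_of_nonneg_left this hβ
  · -- find x₀ ≥ 0 with lam * (v (x₀+δ) - v x₀) ≤ κ₂
    obtain ⟨M, hM⟩ := hbdd
    have hMmem : ∀ x ∈ Set.Ici (0:ℝ), v x ≤ M := fun x hx =>
      hM ⟨x, hx, rfl⟩
    have key : ∃ x₀ : ℝ, 0 ≤ x₀ ∧ lam * (v (x₀ + δ) - v x₀) ≤ κ₂ := by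
      by_contra hcon
      push_neg at hcon
      set c := κ₂ / lam with hc
      have hcpos : 0 < c := div_pos hκ₂ hlam
      have hstep : ∀ x : ℝ, 0 ≤ x → v x + c ≤ v (x + δ) := by
        intro x hx
        have := hcon x hx
        have hcx := hcon x hx
        have : κ₂ / lam ≤ v (x + δ) - v x := by
          rw [div_le_iff₀' hlam]; linarith
        simp only [hc]; linarith
      have hiter : ∀ n : ℕ, v 0 + n * c ≤ v (n * δ) := by
        intro n
        induction n with
        | zero => simp
        | succ n ih =>
          have hnδ : (0:ℝ) ≤ n * δ := by positivity
          have := hstep (n * δ) hnδ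
          push_cast
          calc v 0 + (n + 1 : ℝ) * c = (v 0 + n * c) + c := by ring
            _ ≤ v (n * δ) + c := by linarith
            _ ≤ v (n * δ + δ) := this
            _ = v ((n + 1 : ℝ) * δ) := by ring_nf
      obtain ⟨n, hn⟩ := exists_nat_gt ((M - v 0) / c)
      have h1 := hiter n
      have h2 := hMmem (n * δ) (by simp [Set.mem_Ici]; positivity)
      have : (M - v 0) / c < n := hn
      rw [div_lt_iff₀ hcpos] at this
      linarith
    obtain ⟨x₀, hx₀, hle⟩ := key
    refine ⟨x₀, fun x hx => ?_⟩
    have hxmem : x ∈ Set.Ici (0:ℝ) := le_trans hx₀ hx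
    have h := hΔ x₀ hx₀ x hxmem hx
    have : lam * (v (x + δ) - v x) - κ₂ ≤ 0 := by
      have := mul_le_mul_of_nonneg_left h hlam.le
      linarith
    rw [max_eq_right this, mul_zero]
end

section
/- Let β₁ > 0, L > κ₁ ≥ 0, and let w : [0,∞) → [0,∞) be measurable. For a probability measure μ on [0,∞), define G(Q) = Q - ∫ (1/β₁)(L - κ₁ - w(x) - Q)⁺ dμ(x). Then G is strictly increasing on ℝ, G(0) ≤ 0 with strict inequality if μ({x : w(x) < L - κ₁}) > 0, and G(L - κ₁) ≥ 0. Moreover Q ↦ G(Q) is 1-Lipschitz plus the integral term is (1/β₁)-Lipschitz, hence G is continuous, so there is exactly one root Q* ∈ [0, L - κ₁] whenever μ({x : w(x) < L - κ₁}) > 0. -/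
open MeasureTheory

/-- Structure of `G(Q) = Q - ∫ (1/β₁)(L - κ₁ - w x - Q)⁺ dμ`: strictly
increasing, continuous, sign conditions at the endpoints, and a unique root in
`[0, L - κ₁]` when `μ {w < L - κ₁} > 0`. -/
theorem stmt17 (L κ₁ β₁ : ℝ) (hκ : 0 ≤ κ₁) (hL : κ₁ < L) (hβ : 0 < β₁)
    (w : ℝ → ℝ) (hw : Measurable w) (hw0 : ∀ x, 0 ≤ w x)
    (μ : Measure ℝ) [IsProbabilityMeasure μ] :
    StrictMono (fun Q : ℝ => Q - ∫ x, 1 / β₁ * max (L - κ₁ - w x - Q) 0 ∂μ) ∧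
    (0:ℝ) - (∫ x, 1 / β₁ * max (L - κ₁ - w x - 0) 0 ∂μ) ≤ 0 ∧
    (0 < μ {x | w x < L - κ₁} →
      (0:ℝ) - (∫ x, 1 / β₁ * max (L - κ₁ - w x - 0) 0 ∂μ) < 0) ∧
    0 ≤ (L - κ₁) - ∫ x, 1 / β₁ * max (L - κ₁ - w x - (L - κ₁)) 0 ∂μ ∧
    Continuous (fun Q : ℝ => Q - ∫ x, 1 / β₁ * max (L - κ₁ - w x - Q) 0 ∂μ) ∧
    (0 < μ {x | w x < L - κ₁} →
      ∃! Q : ℝ, Q ∈ Set.Icc 0 (L - κ₁) ∧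
        Q - (∫ x, 1 / β₁ * max (L - κ₁ - w x - Q) 0 ∂μ) = 0) := by
  set f : ℝ → ℝ → ℝ := fun Q x => 1 / β₁ * max (L - κ₁ - w x - Q) 0 with hf
  have hβ' : 0 < 1 / β₁ := by positivity
  have hmeas : ∀ Q, Measurable (f Q) := by
    intro Q
    exact (((measurable_const.sub hw).sub measurable_const).max measurable_const).const_mul _
  have hnonneg : ∀ Q x, 0 ≤ f Q x := by
    intro Q x; exact mul_nonneg hβ'.le (le_max_right _ _)
  have hbd : ∀ Q x, f Q x ≤ 1 / β₁ * max (L - κ₁ - Q) 0 := by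
    intro Q x
    apply mul_le_mul_of_nonneg_left _ hβ'.le
    exact max_le_max (by linarith [hw0 x]) le_rfl
  have hint : ∀ Q, Integrable (f Q) μ := by
    intro Q
    refine (integrable_const (1 / β₁ * max (L - κ₁ - Q) 0)).mono'
      (hmeas Q).aestronglyMeasurable ?_
    filter_upwards with x
    rw [Real.norm_eq_abs, abs_of_nonneg (hnonneg Q x)]
    exact hbd Q x
  have hanti : ∀ Q₁ Q₂ : ℝ, Q₁ ≤ Q₂ → ∀ x, f Q₂ x ≤ f Q₁ x := by
    intro Q₁ Q₂ h x
    exact mul_le_mul_of_nonneg_left (max_le_max (by linarith) le_rfl) hβ'.le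
  set G : ℝ → ℝ := fun Q => Q - ∫ x, f Q x ∂μ with hG
  have hmono : StrictMono G := by
    intro Q₁ Q₂ h
    have : ∫ x, f Q₂ x ∂μ ≤ ∫ x, f Q₁ x ∂μ :=
      integral_mono (hint Q₂) (hint Q₁) (hanti Q₁ Q₂ h.le)
    simp only [hG]
    linarith
  have hlip : ∀ Q₁ Q₂ : ℝ, |(∫ x, f Q₁ x ∂μ) - ∫ x, f Q₂ x ∂μ| ≤ 1 / β₁ * |Q₁ - Q₂| := by
    intro Q₁ Q₂
    rw [← integral_sub (hint Q₁) (hint Q₂)]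
    have := norm_integral_le_of_norm_le_const (μ := μ) (f := fun x => f Q₁ x - f Q₂ x)
      (C := 1 / β₁ * |Q₁ - Q₂|) ?_
    · simpa using this
    · filter_upwards with x
      rw [Real.norm_eq_abs, hf]
      simp only
      rw [← mul_sub, abs_mul, abs_of_pos hβ']
      apply mul_le_mul_of_nonneg_left _ hβ'.le
      have := abs_max_sub_max_le_abs (L - κ₁ - w x - Q₁) (L - κ₁ - w x - Q₂) 0
      calc |max (L - κ₁ - w x - Q₁) 0 - max (L - κ₁ - w x - Q₂) 0|
          ≤ |(L - κ₁ - w x - Q₁) - (L - κ₁ - w x - Q₂)| := this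
        _ = |Q₁ - Q₂| := by rw [show (L - κ₁ - w x - Q₁) - (L - κ₁ - w x - Q₂) = -(Q₁ - Q₂) by ring, abs_neg]
  have hcont : Continuous G := by
    have hIcont : Continuous fun Q => ∫ x, f Q x ∂μ := by
      rw [Metric.continuous_iff]
      intro Q ε hε
      refine ⟨β₁ * ε, by positivity, fun Q' hQ' => ?_⟩
      rw [Real.dist_eq]
      calc |(∫ x, f Q' x ∂μ) - ∫ x, f Q x ∂μ| ≤ 1 / β₁ * |Q' - Q| := hlip Q' Q
        _ < 1 / β₁ * (β₁ * ε) := by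
            apply mul_lt_mul_of_pos_left _ hβ'
            rw [← Real.dist_eq]; exact hQ'
        _ = ε := by field_simp
    exact continuous_id.sub hIcont
  have hG0 : G 0 ≤ 0 := by
    have : 0 ≤ ∫ x, f 0 x ∂μ := integral_nonneg (hnonneg 0)
    simp only [hG]; linarith
  have hG0' : 0 < μ {x | w x < L - κ₁} → G 0 < 0 := by
    intro hpos
    have hkey : 0 < ∫ x, f 0 x ∂μ := by
      rw [integral_pos_iff_support_of_nonneg (hnonneg 0) (hint 0)]
      have : Function.support (f 0) = {x | w x < L - κ₁} := by
        ext x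
        simp only [Function.mem_support, hf, Set.mem_setOf_eq]
        constructor
        · intro h
          by_contra hle
          push_neg at hle
          apply h
          rw [max_eq_right (by linarith), mul_zero]
        · intro h
          have h1 : 0 < L - κ₁ - w x - 0 := by linarith
          rw [max_eq_left (by linarith)]
          positivity
      rw [this]; exact hpos
    simp only [hG]; linarith
  have hGL : 0 ≤ G (L - κ₁) := by
    have : ∀ x, f (L - κ₁) x = 0 := by
      intro x
      simp only [hf]
      rw [max_eq_right (by linarith [hw0 x]), mul_zero]
    have hI : (∫ x, f (L - κ₁) x ∂μ) = 0 := by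
      simp only [this, integral_zero]
    simp only [hG, hI]
    linarith
  refine ⟨hmono, hG0, hG0', hGL, hcont, ?_⟩
  intro hpos
  have h0 : G 0 < 0 := hG0' hpos
  have hle : (0:ℝ) ≤ L - κ₁ := by linarith
  have hivt : Set.Icc (G 0) (G (L - κ₁)) ⊆ G '' Set.Icc 0 (L - κ₁) :=
    intermediate_value_Icc hle hcont.continuousOn
  obtain ⟨Q, hQmem, hQ⟩ := hivt ⟨h0.le, hGL⟩
  refine ⟨Q, ⟨hQmem, hQ⟩, ?_⟩
  rintro Q' ⟨_, hQ'⟩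
  exact hmono.injective (show G Q' = G Q by rw [hQ]; exact hQ')
end
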